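/- arXiv:1807.09401 — 2 statements merged into one kernel-verified Lean document; each statement's English description precedes it below -/
import Mathlib

section
/- Let λ ≠ 0 be real, p ≠ 0 real, n ≥ 1, h > 0 with |ph| < π, z = ph. Define ω̄ = -iλp, ω_n = -i ∑_{j=0}^{n} (2^j λ/(3^j h)) sin z · sin^{2j}(z/2), and ω_G = (-iλ sin(z)/h)/(1 - (2/3)sin²(z/2)). Then |ω_G - ω̄| < |ω_n - ω̄|. -/
/-!
With `z = p h` and `t = (2/3) sin²(z/2) ∈ (0, 1)`, the `n`-th corrected symbol is the `n`-th
partial sum of the geometric series in `t` whose sum is the Galerkin symbol, so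
`ω_n - ω̄ = (ω_G - ω̄) - δ` with `δ = -i λ sin z tⁿ⁺¹ / (h (1 - t))`. Since `1 - t = (2 + cos z) / 3`,
the Cusa–Huygens inequality `sin z < z (2 + cos z) / 3` on `(0, π)` says that `ω_G - ω̄` and `δ`
lie on opposite sides of the origin on the imaginary axis, hence `|ω_G - ω̄| < |ω_G - ω̄ - δ|`.
-/

open Finset in
/-- Fourier symbol of the `m`-th corrected mass-lumped scheme for pure transport. -/
noncomputable def omegaTransport (lam p h : ℝ) (m : ℕ) : ℂ :=
  -Complex.I * ((∑ j ∈ range (m+1),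
      (2:ℝ)^j * lam / (3^j * h) * Real.sin (p*h) * Real.sin (p*h/2) ^ (2*j) : ℝ) : ℂ)

/-- Fourier symbol of the consistent Galerkin scheme for pure transport. -/
noncomputable def omegaGalTransport (lam p h : ℝ) : ℂ :=
  -Complex.I * ((lam * Real.sin (p*h) / h / (1 - (2/3) * Real.sin (p*h/2)^2) : ℝ) : ℂ)

namespace Real

lemma cos_eq_one_sub_two_mul_sin_half_sq (x : ℝ) : cos x = 1 - 2 * sin (x / 2) ^ 2 := by
  have h := cos_two_mul (x / 2)
  rw [mul_div_cancel₀ x two_ne_zero, cos_sq'] at h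
  linarith

lemma one_sub_two_div_three_mul_sin_half_sq (x : ℝ) :
    1 - 2 / 3 * sin (x / 2) ^ 2 = (2 + cos x) / 3 := by
  rw [cos_eq_one_sub_two_mul_sin_half_sq]; ring

/-- In half-angle form this is `x / 2 < tan (x / 2)`. -/
lemma mul_sin_lt_two_mul_one_sub_cos {x : ℝ} (h0 : 0 < x) (hπ : x < π) :
    x * sin x < 2 * (1 - cos x) := by
  have hsin : 0 < sin (x / 2) := sin_pos_of_pos_of_lt_pi (by linarith) (by linarith [pi_pos])
  have hcos : 0 < cos (x / 2) := cos_pos_of_mem_Ioo ⟨by linarith [pi_pos], by linarith⟩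
  have htan : x / 2 * cos (x / 2) < sin (x / 2) := by
    rw [← lt_div_iff₀ hcos, ← tan_eq_sin_div_cos]
    exact lt_tan (by linarith) (by linarith)
  have hsin_two : sin x = 2 * sin (x / 2) * cos (x / 2) := by
    rw [← sin_two_mul]; ring_nf
  rw [cos_eq_one_sub_two_mul_sin_half_sq x, hsin_two]
  nlinarith [mul_lt_mul_of_pos_left htan hsin]

/-- The Cusa–Huygens inequality. -/
lemma sin_lt_mul_two_add_cos_div_three {x : ℝ} (h0 : 0 < x) (hπ : x < π) :
    sin x < x * (2 + cos x) / 3 := by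
  let g : ℝ → ℝ := fun y ↦ y * (2 + cos y) / 3 - sin y
  have hg : ∀ y, HasDerivAt g ((2 * (1 - cos y) - y * sin y) / 3) y := fun y ↦ by
    refine ((((hasDerivAt_id' y).mul ((hasDerivAt_cos y).const_add 2)).div_const 3).sub
      (hasDerivAt_sin y)).congr_deriv ?_
    ring
  have hmono : StrictMonoOn g (Set.Icc 0 π) := by
    refine strictMonoOn_of_deriv_pos (convex_Icc 0 π) (by fun_prop) fun y hy ↦ ?_
    rw [interior_Icc] at hy
    rw [(hg y).deriv]
    linarith [mul_sin_lt_two_mul_one_sub_cos hy.1 hy.2]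
  have := hmono ⟨le_rfl, pi_pos.le⟩ ⟨h0.le, hπ.le⟩ h0
  simp only [g, zero_mul, zero_div, sin_zero, sub_zero] at this
  linarith

lemma sin_sub_mul_two_add_cos_div_three_mul_sin_neg {x : ℝ} (hx : x ≠ 0) (hπ : |x| < π) :
    (sin x - x * (2 + cos x) / 3) * sin x < 0 := by
  wlog h0 : 0 < x generalizing x
  · have := this (neg_ne_zero.mpr hx) (by rwa [abs_neg]) (by grind)
    simp only [sin_neg, cos_neg] at this
    linarith
  have hπ' : x < π := (le_abs_self x).trans_lt hπ
  exact mul_neg_of_neg_of_pos (by linarith [sin_lt_mul_two_add_cos_div_three h0 hπ'])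
    (sin_pos_of_pos_of_lt_pi h0 hπ')

end Real

lemma abs_lt_abs_sub_of_mul_neg {α : Type*} [CommRing α] [LinearOrder α] [IsStrictOrderedRing α]
    {a b : α} (h : a * b < 0) : |a| < |a - b| :=
  sq_lt_sq.mp (by nlinarith [sq_nonneg b])

lemma Complex.norm_neg_I_mul_sub_neg_I_mul (x y : ℝ) :
    ‖-I * (x : ℂ) - -I * (y : ℂ)‖ = |x - y| := by
  rw [← mul_sub, norm_mul, norm_neg, norm_I, one_mul, ← ofReal_sub, norm_real, Real.norm_eq_abs]

open Finset Real

lemma mul_geom_sum_eq_div_sub {K : Type*} [Field K] {t : K} (ht : t ≠ 1) (c : K) (m : ℕ) :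
    c * ∑ j ∈ range m, t ^ j = c / (1 - t) - c * t ^ m / (1 - t) := by
  have h1 : 1 - t ≠ 0 := sub_ne_zero.mpr ht.symm
  have h2 : t - 1 ≠ 0 := sub_ne_zero.mpr ht
  rw [geom_sum_eq ht]
  field_simp
  ring

lemma sum_corrected_eq_mul_geom_sum (lam p h : ℝ) (m : ℕ) :
    ∑ j ∈ range (m + 1), (2:ℝ)^j * lam / (3^j * h) * sin (p*h) * sin (p*h/2) ^ (2*j)
      = lam * sin (p*h) / h * ∑ j ∈ range (m + 1), (2/3 * sin (p*h/2)^2) ^ j := by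
  rw [mul_sum]
  refine sum_congr rfl fun j _ ↦ ?_
  rw [mul_pow, div_pow, pow_mul]
  field_simp

theorem stmt_9_general (lam p h : ℝ) (n : ℕ) (hlam : lam ≠ 0) (hp : p ≠ 0)
    (hh : 0 < h) (hz : |p*h| < Real.pi) :
    ‖omegaGalTransport lam p h - (-Complex.I * ((lam * p : ℝ) : ℂ))‖
      < ‖omegaTransport lam p h n - (-Complex.I * ((lam * p : ℝ) : ℂ))‖ := by
  rw [omegaGalTransport, omegaTransport, sum_corrected_eq_mul_geom_sum,
    Complex.norm_neg_I_mul_sub_neg_I_mul, Complex.norm_neg_I_mul_sub_neg_I_mul]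
  set z := p * h with hz_def
  set t := 2/3 * sin (z/2)^2 with ht_def
  have hz0 : z ≠ 0 := mul_ne_zero hp hh.ne'
  have ht0 : 0 < t := by
    have : sin (z/2) ≠ 0 := by rw [Ne, sin_eq_zero_iff_of_lt_of_lt] <;> grind
    positivity
  have ht1 : t < 1 := by nlinarith [sin_sq_le_one (z/2)]
  have hcusa : (sin z - z * (1 - t)) * sin z < 0 := by
    rw [ht_def, one_sub_two_div_three_mul_sin_half_sq, ← mul_div_assoc]
    exact sin_sub_mul_two_add_cos_div_three_mul_sin_neg hz0 hz
  rw [mul_geom_sum_eq_div_sub ht1.ne, sub_right_comm]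
  refine abs_lt_abs_sub_of_mul_neg ?_
  have hp_eq : p = z / h := by rw [hz_def]; field_simp
  have h1t : 1 - t ≠ 0 := by linarith
  have hprod : (lam * sin z / h / (1 - t) - lam * p) * (lam * sin z / h * t ^ (n + 1) / (1 - t))
      = (lam / h) ^ 2 * t ^ (n + 1) / (1 - t) ^ 2 * ((sin z - z * (1 - t)) * sin z) := by
    rw [hp_eq]; field_simp
  rw [hprod]
  exact mul_neg_of_pos_of_neg (by positivity) hcusa

theorem stmt_9 (lam p h : ℝ) (n : ℕ) (hlam : lam ≠ 0) (hp : p ≠ 0) (hn : 1 ≤ n)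
    (hh : 0 < h) (hz : |p*h| < Real.pi) :
    ‖omegaGalTransport lam p h - (-Complex.I * ((lam * p : ℝ) : ℂ))‖
      < ‖omegaTransport lam p h n - (-Complex.I * ((lam * p : ℝ) : ℂ))‖ :=
  stmt_9_general lam p h n hlam hp hh hz
end

section
/- Let κ ≥ 0, λ be real with κ + |λ| > 0, p ≠ 0 real, h > 0 with |ph| < π, z = ph. Define ω̄ = -κp² - iλp, ω_L = -(4κ/h²)sin²(z/2) - i(λ/h)sin z, and ω_1 = ω_L - (8κ/(3h²))sin⁴(z/2) - i(2λ/(3h)) sin z sin²(z/2). Then |ω_1 - ω̄| < |ω_L - ω̄|. -/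
/-!
Writing z = p h, the errors ω_L - ω̄ and ω_1 - ω̄ have real parts (4κ/h²)·a and imaginary parts
(λ/h)·b, where a = (z/2)² - sin²(z/2) and b = z - sin z for plain lumping, and the correction
subtracts (2/3) sin⁴(z/2) from a and (2/3) sin z sin²(z/2) from b. Each subtracted term has the
sign of the term it corrects and less than twice its size, so both |a| and |b| strictly
decrease. The size bounds amount to sin x + sin³x / 6 < x and 7 sin z - sin z cos z < 6 z on
(0, π): both differences vanish at 0 and have positive derivative there.
-/

open Real

lemma lt_of_hasDerivAt_pos {f f' : ℝ → ℝ} {a b : ℝ} (hf : ∀ t, HasDerivAt f (f' t) t)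
    (hf' : ∀ t ∈ Set.Ioo a b, 0 < f' t) (hab : a < b) : f a < f b := by
  have hmono : StrictMonoOn f (Set.Icc a b) :=
    strictMonoOn_of_hasDerivWithinAt_pos (convex_Icc a b)
      (fun t _ ↦ (hf t).continuousAt.continuousWithinAt)
      (fun t _ ↦ (hf t).hasDerivWithinAt) (by rwa [interior_Icc])
  exact hmono (Set.left_mem_Icc.2 hab.le) (Set.right_mem_Icc.2 hab.le) hab

lemma cos_lt_one_of_pos_of_le_pi {x : ℝ} (h0 : 0 < x) (hx : x ≤ π) : cos x < 1 :=
  cos_zero ▸ cos_lt_cos_of_nonneg_of_le_pi le_rfl hx h0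

lemma sin_add_sin_pow_three_div_six_lt {x : ℝ} (h0 : 0 < x) (hx : x < π) :
    sin x + sin x ^ 3 / 6 < x := by
  have hderiv : ∀ t, HasDerivAt (fun t ↦ t - sin t - sin t ^ 3 / 6)
      (1 - cos t - 3 * sin t ^ 2 * cos t / 6) t := fun t ↦
    (((hasDerivAt_id t).sub (hasDerivAt_sin t)).sub
      (((hasDerivAt_sin t).pow 3).div_const 6)).congr_deriv (by simp)
  have hlt := lt_of_hasDerivAt_pos hderiv (fun t ht ↦ by
    have hc := cos_lt_one_of_pos_of_le_pi ht.1 (ht.2.trans hx).le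
    -- the derivative factors as (1 - cos t)² (2 + cos t) / 2
    nlinarith [sin_sq t, neg_one_le_cos t, mul_pos (pow_pos (sub_pos.2 hc) 2)
      (show 0 < cos t + 2 by linarith [neg_one_le_cos t])]) h0
  simp only [sin_zero] at hlt
  linarith

lemma seven_mul_sin_sub_sin_mul_cos_lt {x : ℝ} (h0 : 0 < x) (hx : x < π) :
    7 * sin x - sin x * cos x < 6 * x := by
  have hderiv : ∀ t, HasDerivAt (fun t ↦ 6 * t - 7 * sin t + sin t * cos t)
      (6 - 7 * cos t + (cos t * cos t + sin t * -sin t)) t := fun t ↦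
    (((hasDerivAt_id t).const_mul 6).sub ((hasDerivAt_sin t).const_mul 7)).add
      ((hasDerivAt_sin t).mul (hasDerivAt_cos t)) |>.congr_deriv (by simp)
  have hlt := lt_of_hasDerivAt_pos hderiv (fun t ht ↦ by
    have hc := cos_lt_one_of_pos_of_le_pi ht.1 (ht.2.trans hx).le
    -- the derivative is (1 - cos t) (5 - 2 cos t)
    nlinarith [sin_sq t, neg_one_le_cos t, mul_pos (sub_pos.2 hc)
      (show 0 < 5 - 2 * cos t by linarith [cos_le_one t])]) h0
  simp only [sin_zero] at hlt
  linarith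

lemma sin_sq_add_sin_pow_four_div_three_lt_sq {x : ℝ} (hx0 : x ≠ 0) (hx : |x| < π) :
    sin x ^ 2 + sin x ^ 4 / 3 < x ^ 2 := by
  wlog hpos : 0 < x generalizing x
  · simpa [sin_neg, Even.neg_pow (by decide : Even 4)] using
      this (neg_ne_zero.2 hx0) (by rwa [abs_neg]) (neg_pos.2 (lt_of_le_of_ne (not_lt.1 hpos) hx0))
  have hs : 0 < sin x := sin_pos_of_pos_of_lt_pi hpos (abs_lt.1 hx).2
  have hsq := pow_lt_pow_left₀ (sin_add_sin_pow_three_div_six_lt hpos (abs_lt.1 hx).2)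
    (by positivity) two_ne_zero
  nlinarith [pow_pos hs 6]

lemma abs_sub_lt_abs_of_pos_of_lt_two_mul {a c : ℝ} (hc : 0 < c) (hca : c < 2 * a) :
    |a - c| < |a| := by
  rw [abs_of_pos (show 0 < a by linarith), abs_sub_lt_iff]
  constructor <;> linarith

lemma abs_sq_sub_sin_sq_sub_lt {x : ℝ} (hx0 : x ≠ 0) (hx : |x| < π) :
    |x ^ 2 - sin x ^ 2 - 2 / 3 * sin x ^ 4| < |x ^ 2 - sin x ^ 2| := by
  have hs : sin x ≠ 0 := fun h ↦ hx0 <|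
    (sin_eq_zero_iff_of_lt_of_lt (abs_lt.1 hx).1 (abs_lt.1 hx).2).1 h
  exact abs_sub_lt_abs_of_pos_of_lt_two_mul (by positivity)
    (by linarith [sin_sq_add_sin_pow_four_div_three_lt_sq hx0 hx])

lemma abs_sub_sin_sub_lt {z : ℝ} (hz0 : z ≠ 0) (hz : |z| < π) :
    |z - sin z - 2 / 3 * sin z * sin (z / 2) ^ 2| < |z - sin z| := by
  wlog hpos : 0 < z generalizing z
  · have := this (neg_ne_zero.2 hz0) (by rwa [abs_neg])
      (neg_pos.2 (lt_of_le_of_ne (not_lt.1 hpos) hz0))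
    rw [neg_div, sin_neg, sin_neg, ← abs_neg, ← abs_neg (-z - -sin z)] at this
    convert this using 2 <;> ring
  have hs : 0 < sin z := sin_pos_of_pos_of_lt_pi hpos (abs_lt.1 hz).2
  have hc := cos_lt_one_of_pos_of_le_pi hpos (abs_lt.1 hz).2.le
  have hhalf : sin (z / 2) ^ 2 = (1 - cos z) / 2 := by
    rw [sin_sq_eq_half_sub, mul_div_cancel₀ z two_ne_zero]; ring
  rw [hhalf]
  exact abs_sub_lt_abs_of_pos_of_lt_two_mul (by linarith [mul_pos hs (sub_pos.2 hc)])
    (by linarith [seven_mul_sin_sub_sin_mul_cos_lt hpos (abs_lt.1 hz).2])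

lemma Complex.norm_lt_norm_of_abs_re_le_of_abs_im_le {w w' : ℂ} (hre : |w.re| ≤ |w'.re|)
    (him : |w.im| ≤ |w'.im|) (h : |w.re| < |w'.re| ∨ |w.im| < |w'.im|) : ‖w‖ < ‖w'‖ := by
  rw [← sq_lt_sq₀ (norm_nonneg w) (norm_nonneg w'), Complex.sq_norm, Complex.sq_norm,
    Complex.normSq_apply, Complex.normSq_apply, ← sq, ← sq, ← sq, ← sq,
    ← sq_abs w.re, ← sq_abs w.im, ← sq_abs w'.re, ← sq_abs w'.im]
  have hre2 := pow_le_pow_left₀ (abs_nonneg _) hre 2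
  have him2 := pow_le_pow_left₀ (abs_nonneg _) him 2
  rcases h with h | h
  · linarith [pow_lt_pow_left₀ h (abs_nonneg _) two_ne_zero]
  · linarith [pow_lt_pow_left₀ h (abs_nonneg _) two_ne_zero]

theorem stmt_10_general (kappa lam p h : ℝ) (hpos : 0 < kappa + |lam|)
    (hp : p ≠ 0) (hh : 0 < h) (hz : |p*h| < Real.pi) :
    let z := p * h
    let omegaBar : ℂ := -((kappa * p^2 : ℝ) : ℂ) - Complex.I * ((lam * p : ℝ) : ℂ)
    let omegaL : ℂ := -((4 * kappa / h^2 * Real.sin (z/2)^2 : ℝ) : ℂ)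
      - Complex.I * ((lam / h * Real.sin z : ℝ) : ℂ)
    let omega1 : ℂ := omegaL - ((8 * kappa / (3 * h^2) * Real.sin (z/2)^4 : ℝ) : ℂ)
      - Complex.I * ((2 * lam / (3 * h) * Real.sin z * Real.sin (z/2)^2 : ℝ) : ℂ)
    ‖omega1 - omegaBar‖ < ‖omegaL - omegaBar‖ := by
  intro z omegaBar omegaL omega1
  have hz0 : z ≠ 0 := mul_ne_zero hp hh.ne'
  have hL : omegaL - omegaBar =
      ⟨4 * kappa / h ^ 2 * ((z / 2) ^ 2 - sin (z / 2) ^ 2), lam / h * (z - sin z)⟩ := by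
    apply Complex.ext <;>
      simp only [omegaL, omegaBar, z, Complex.sub_re, Complex.sub_im, Complex.neg_re,
        Complex.neg_im, Complex.mul_re, Complex.mul_im, Complex.I_re, Complex.I_im,
        Complex.ofReal_re, Complex.ofReal_im] <;> field_simp <;> ring
  have h1 : omega1 - omegaBar =
      ⟨4 * kappa / h ^ 2 * ((z / 2) ^ 2 - sin (z / 2) ^ 2 - 2 / 3 * sin (z / 2) ^ 4),
        lam / h * (z - sin z - 2 / 3 * sin z * sin (z / 2) ^ 2)⟩ := by
    apply Complex.ext <;>
      simp only [omega1, omegaL, omegaBar, z, Complex.sub_re, Complex.sub_im, Complex.neg_re,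
        Complex.neg_im, Complex.mul_re, Complex.mul_im, Complex.I_re, Complex.I_im,
        Complex.ofReal_re, Complex.ofReal_im] <;> field_simp <;> ring
  have hre := abs_sq_sub_sin_sq_sub_lt (x := z / 2) (by positivity) (by
    rw [abs_div, abs_two]; linarith [pi_pos])
  have him := abs_sub_sin_sub_lt hz0 hz
  rw [hL, h1]
  refine Complex.norm_lt_norm_of_abs_re_le_of_abs_im_le ?_ ?_ ?_ <;>
    simp only [abs_mul]
  · gcongr
  · gcongr
  by_cases hk : kappa = 0
  · have hl : lam ≠ 0 := by rintro rfl; simp [hk] at hpos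
    exact Or.inr (mul_lt_mul_of_pos_left him (abs_pos.2 (div_ne_zero hl hh.ne')))
  · exact Or.inl (mul_lt_mul_of_pos_left hre (abs_pos.2 (by positivity)))

theorem stmt_10 (kappa lam p h : ℝ) (hkappa : 0 ≤ kappa) (hpos : 0 < kappa + |lam|)
    (hp : p ≠ 0) (hh : 0 < h) (hz : |p*h| < Real.pi) :
    let z := p * h
    let omegaBar : ℂ := -((kappa * p^2 : ℝ) : ℂ) - Complex.I * ((lam * p : ℝ) : ℂ)
    let omegaL : ℂ := -((4 * kappa / h^2 * Real.sin (z/2)^2 : ℝ) : ℂ)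
      - Complex.I * ((lam / h * Real.sin z : ℝ) : ℂ)
    let omega1 : ℂ := omegaL - ((8 * kappa / (3 * h^2) * Real.sin (z/2)^4 : ℝ) : ℂ)
      - Complex.I * ((2 * lam / (3 * h) * Real.sin z * Real.sin (z/2)^2 : ℝ) : ℂ)
    ‖omega1 - omegaBar‖ < ‖omegaL - omegaBar‖ :=
  stmt_10_general kappa lam p h hpos hp hh hz
end
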